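/- Every convex-Gaussian state ρ on ℂ^N has an n-Gaussian-symmetric extension for every n ≥ 1; explicitly, if ρ = Σ_i p_i |ψ_i⟩⟨ψ_i| with pure Gaussian states |ψ_i⟩⟨ψ_i|, probabilities p_i ≥ 0 and Σ_i p_i = 1, then ρ^{(n)} = Σ_i p_i (|ψ_i⟩⟨ψ_i|)^{⊗n} is an n-Gaussian-symmetric extension of ρ. -/

import Mathlib

open Matrix Kronecker Finset
open scoped ComplexOrder

noncomputable section

/-- A Majorana family: `2*m` Hermitian `2^m × 2^m` complex matrices squaring to the
identity and pairwise anticommuting. -/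
structure MajoranaFamily (m : ℕ) where
  c : Fin (2*m) → Matrix (Fin (2^m)) (Fin (2^m)) ℂ
  herm : ∀ j, (c j).IsHermitian
  sq : ∀ j, c j * c j = 1
  anticomm : ∀ j k, j ≠ k → c j * c k = -(c k * c j)

abbrev Mat (m : ℕ) := Matrix (Fin (2^m)) (Fin (2^m)) ℂ
abbrev Mat2 (m : ℕ) := Matrix (Fin (2^m) × Fin (2^m)) (Fin (2^m) × Fin (2^m)) ℂ
abbrev MatN (m n : ℕ) := Matrix (Fin n → Fin (2^m)) (Fin n → Fin (2^m)) ℂ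

variable {m : ℕ}

/-- A state: a positive semidefinite matrix of trace `1`. -/
def IsState {ι : Type*} [Fintype ι] (ρ : Matrix ι ι ℂ) : Prop :=
  ρ.PosSemidef ∧ ρ.trace = 1

/-- The square root of a positive semidefinite matrix (the Mathlib definition of
December 2024, since removed from Mathlib). -/
def Matrix.PosSemidef.sqrt {n : Type*} [Fintype n] [DecidableEq n] {A : Matrix n n ℂ}
    (hA : A.PosSemidef) : Matrix n n ℂ :=
  (hA.1.eigenvectorUnitary : Matrix n n ℂ) * diagonal ((↑) ∘ Real.sqrt ∘ hA.1.eigenvalues) *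
    (star hA.1.eigenvectorUnitary : Matrix n n ℂ)

/-- The trace norm `‖X‖₁ = Tr √(XᴴX)`. -/
def traceNorm {ι : Type*} [Fintype ι] [DecidableEq ι] (X : Matrix ι ι ℂ) : ℝ :=
  ((Matrix.posSemidef_conjTranspose_mul_self X).sqrt.trace).re

/-- The rotated Majorana operators `c̃_j = Σ_i R_{ij} c_i`. -/
def tilde (F : MajoranaFamily m) (R : Matrix (Fin (2*m)) (Fin (2*m)) ℝ)
    (j : Fin (2*m)) : Mat m :=
  ∑ i, (R i j : ℂ) • F.c i

/-- Standard-form Gaussian state `2^{-m} ∏_{k=1}^m (I + i λ_k c̃_{2k-1} c̃_{2k})`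
(ordered product; the factors commute). -/
def gaussStd (F : MajoranaFamily m) (R : Matrix (Fin (2*m)) (Fin (2*m)) ℝ)
    (lam : Fin m → ℝ) : Mat m :=
  ((2:ℂ)^m)⁻¹ • (List.ofFn (fun k : Fin m =>
    (1 : Mat m) + (Complex.I * (lam k : ℂ)) •
      (tilde F R ⟨2*k.val, by omega⟩ * tilde F R ⟨2*k.val+1, by omega⟩))).prod

/-- A pure Gaussian state: a standard-form Gaussian state with all `λ_k ∈ {-1,1}`,
for some `R ∈ SO(2m,ℝ)`. -/
def IsPureGaussian (F : MajoranaFamily m) (ρ : Mat m) : Prop :=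
  ∃ (R : Matrix (Fin (2*m)) (Fin (2*m)) ℝ) (lam : Fin m → ℝ),
    Rᵀ * R = 1 ∧ R.det = 1 ∧ (∀ k, lam k = 1 ∨ lam k = -1) ∧ ρ = gaussStd F R lam

/-- A convex-Gaussian state: a finite convex combination of pure Gaussian states. -/
def IsConvexGaussian (F : MajoranaFamily m) (ρ : Mat m) : Prop :=
  ∃ (k : ℕ) (p : Fin k → ℝ) (g : Fin k → Mat m),
    (∀ i, 0 ≤ p i) ∧ (∑ i, p i) = 1 ∧ (∀ i, IsPureGaussian F (g i)) ∧
    ρ = ∑ i, p i • g i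

/-- `Λ = Σ_j c_j ⊗ c_j` on `ℂ^N ⊗ ℂ^N`. -/
def Lambda (F : MajoranaFamily m) : Mat2 m := ∑ j, F.c j ⊗ₖ F.c j

/-- Ordered product `c_{a_1} ⋯ c_{a_r}` over a finite set `S = {a_1 < … < a_r}`. -/
def majProd (F : MajoranaFamily m) (S : Finset (Fin (2*m))) : Mat m :=
  ((S.sort (· ≤ ·)).map F.c).prod

/-- An even operator: a complex linear combination of the identity and products of
an even number of distinct Majorana operators. -/
def IsEven (F : MajoranaFamily m) (X : Mat m) : Prop :=
  X ∈ Submodule.span ℂ {Y : Mat m | ∃ S : Finset (Fin (2*m)), Even S.card ∧ Y = majProd F S}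

/-- The Hermitian correlator `i^k c_{a_1} ⋯ c_{a_{2k}}` associated to a set of
cardinality `2k`. -/
def corrOp (F : MajoranaFamily m) (S : Finset (Fin (2*m))) : Mat m :=
  (Complex.I ^ (S.card / 2)) • majProd F S

/-- The operator acting as `A` on the `k`-th tensor factor of `(ℂ^N)^{⊗n}` and as the
identity on the other factors. -/
def embedAt (n : ℕ) (k : Fin n) (A : Mat m) : MatN m n :=
  fun x y => A (x k) (y k) * ∏ l ∈ Finset.univ.erase k, (if x l = y l then 1 else 0)

/-- `Λ^{k,l} = Σ_j c_j^{(k)} c_j^{(l)}` on `(ℂ^N)^{⊗n}`. -/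
def LambdaKL (F : MajoranaFamily m) (n : ℕ) (k l : Fin n) : MatN m n :=
  ∑ j, embedAt n k (F.c j) * embedAt n l (F.c j)

/-- Partial trace of an operator on `(ℂ^N)^{⊗n}` over the tensor factors `2, …, n`. -/
def ptrRest (n : ℕ) (hn : 1 ≤ n) (ρ : MatN m n) : Mat m := fun a b =>
  ∑ g : Fin (n-1) → Fin (2^m),
    ρ (fun i => if h : i.val = 0 then a else g ⟨i.val - 1, by omega⟩)
      (fun i => if h : i.val = 0 then b else g ⟨i.val - 1, by omega⟩)

/-- `ρ` has an `n`-Gaussian-symmetric extension. -/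
def HasGSExt (F : MajoranaFamily m) (n : ℕ) (hn : 1 ≤ n) (ρ : Mat m) : Prop :=
  ∃ ext : MatN m n, IsState ext ∧ ptrRest n hn ext = ρ ∧
    ∀ k l : Fin n, k ≠ l → LambdaKL F n k l * ext = 0

/-- `‖Λ‖₁ = 2(m+1) C(2m, m+1)`. -/
def lambdaNorm (m : ℕ) : ℝ := 2*(m+1) * (Nat.choose (2*m) (m+1) : ℝ)

/-- `ε(n) = min {2, 10 ‖Λ‖₁² 2^{2m} n^{-1/3}}`. -/
def epsB (m n : ℕ) : ℝ :=
  min 2 (10 * lambdaNorm m ^ 2 * 2^(2*m) / (n:ℝ) ^ ((1:ℝ)/3))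

/-- `χ(n) = (ε(n)/2) (2m)!/m!`. -/
def chiB (m n : ℕ) : ℝ :=
  epsB m n / 2 * ((Nat.factorial (2*m) : ℝ) / (Nat.factorial m : ℝ))

/-- `δ(n) = χ(n)/(1+χ(n))`. -/
def deltaB (m n : ℕ) : ℝ := chiB m n / (1 + chiB m n)

/-- The parity operator `P = i^m c_1 ⋯ c_{2m}`. -/
def parityOp (F : MajoranaFamily m) : Mat m :=
  (Complex.I ^ m) • (((List.finRange (2*m)).map F.c).prod)

/-- The operator `I^{⊗ r} ⊗ c_s ⊗ P^{⊗(n-r-1)}` on `(ℂ^N)^{⊗n}` (0-based position `r`). -/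
def dOp (F : MajoranaFamily m) (n : ℕ) (r : Fin n) (s : Fin (2*m)) : MatN m n :=
  fun x y => ∏ l : Fin n,
    if l < r then (if x l = y l then 1 else 0)
    else if l = r then F.c s (x l) (y l)
    else parityOp F (x l) (y l)

/-- The family `d_1, …, d_{2mn}`, where `d_{2m(r-1)+s} = I^{⊗(r-1)} ⊗ c_s ⊗ P^{⊗(n-r)}`. -/
def dAll (hm : 1 ≤ m) (F : MajoranaFamily m) (n : ℕ) (j : Fin (2*(m*n))) : MatN m n :=
  dOp F n
    ⟨j.val / (2*m), by
      have h1 := j.isLt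
      rw [Nat.div_lt_iff_lt_mul (by omega)]
      have h2 : n * (2*m) = 2*(m*n) := by ring
      omega⟩
    ⟨j.val % (2*m), Nat.mod_lt _ (by omega)⟩

/-- The index `2m(k-1)+j` (0-based: `2mk + j`) into a family of `2mn` Majorana operators. -/
def bigIdx (m n : ℕ) (k : Fin n) (j : Fin (2*m)) : Fin (2*(m*n)) :=
  ⟨2*m*k.val + j.val, by
    have hk : k.val + 1 ≤ n := k.isLt
    have hj := j.isLt
    have h1 : 2*m*(k.val+1) = 2*m*k.val + 2*m := by ring
    have h2 : 2*m*(k.val+1) ≤ 2*m*n := Nat.mul_le_mul le_rfl hk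
    have h3 : 2*m*n = 2*(m*n) := by ring
    omega⟩

/-- `Γ^{k,l} = Σ_{j=1}^{2m} (-1)^{m-j} e_{2m(k-1)+j} · e_{2m(l-1)+1} ⋯ ê_{2m(l-1)+j} ⋯ e_{2ml}`. -/
def GammaKL (m n : ℕ) (E : MajoranaFamily (m*n)) (k l : Fin n) :
    Matrix (Fin (2^(m*n))) (Fin (2^(m*n))) ℂ :=
  ∑ j : Fin (2*m), ((-1:ℂ) ^ ((m:ℤ) - (j.val+1 : ℤ))) •
    (E.c (bigIdx m n k j) *
      (((List.finRange (2*m)).filter (fun i => i ≠ j)).map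
        (fun i => E.c (bigIdx m n l i))).prod)

/-- `C = i^{mn} e_1 ⋯ e_{2mn}`. -/
def bigParity (m n : ℕ) (E : MajoranaFamily (m*n)) :
    Matrix (Fin (2^(m*n))) (Fin (2^(m*n))) ℂ :=
  (Complex.I ^ (m*n)) • (((List.finRange (2*(m*n))).map E.c).prod)

/-- The `n`-fold tensor power `A^{⊗n}` of a matrix on `ℂ^N`. -/
def tpow (n : ℕ) (A : Mat m) : MatN m n := fun x y => ∏ k, A (x k) (y k)

/-!
Rotating the Majorana family by the orthogonal matrix `R` gives another Majorana family with the
same `Λ = Σ_j c_j ⊗ c_j`, and in terms of the rotated family a pure Gaussian state `ρ` is the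
product of the commuting Hermitian projections `(1 + iλ_k c_{2k} c_{2k+1}) / 2`. So `ρ` is a
projection; its trace is `1` because `c_{2k}` anticommutes with the `k`-th factor and commutes
with the others, which makes `tr (c_{2k} c_{2k+1} Y) = 0` at each step of the induction. Moreover
`c_{2k} ρ = iλ_k c_{2k+1} ρ`, so the terms of `Λ (ρ ⊗ ρ)` cancel in pairs. Tensor powers of a
trace-one projection are trace-one projections whose partial trace is the projection itself, and
`Λ^{k,l}` acts on `ρ^{⊗n}` as `Λ` acts on the factors `k` and `l`. All of this is preserved by
convex combinations.
-/

section CommutingProducts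

variable {M : Type*} [Monoid M] {l : List M}

theorem List.isSelfAdjoint_prod [StarMul M] (hc : l.Pairwise Commute)
    (h : ∀ x ∈ l, IsSelfAdjoint x) : IsSelfAdjoint l.prod := by
  induction l with
  | nil => exact IsSelfAdjoint.one M
  | cons a l ih =>
    rw [List.pairwise_cons] at hc
    have ha := h a List.mem_cons_self
    have hl := ih hc.2 fun x hx => h x (List.mem_cons_of_mem a hx)
    exact (ha.commute_iff hl).mp (Commute.list_prod_right _ _ hc.1)

theorem List.isIdempotentElem_prod (hc : l.Pairwise Commute)
    (h : ∀ x ∈ l, IsIdempotentElem x) : IsIdempotentElem l.prod := by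
  induction l with
  | nil => exact IsIdempotentElem.one
  | cons a l ih =>
    rw [List.pairwise_cons] at hc
    exact (h a List.mem_cons_self).mul_of_commute (Commute.list_prod_right _ _ hc.1)
      (ih hc.2 fun x hx => h x (List.mem_cons_of_mem a hx))

theorem List.exists_prod_eq_mul_of_mem (hc : l.Pairwise Commute) {a : M} (ha : a ∈ l) :
    ∃ b, l.prod = a * b := by
  obtain ⟨s, t, rfl⟩ := List.append_of_mem ha
  exact ⟨(s ++ t).prod, by rw [List.perm_middle.prod_eq' hc, List.prod_cons]⟩

end CommutingProducts

theorem Matrix.trace_mul_eq_zero_of_anticommute {n R : Type*} [Fintype n] [DecidableEq n]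
    [CommRing R] [IsAddTorsionFree R] {c x y : Matrix n n R} (hc : c * c = 1)
    (hx : c * x = -(x * c)) (hy : Commute c y) : (x * y).trace = 0 := by
  have hconj : c * (x * y * c) = -(x * y) := calc
    c * (x * y * c) = c * x * y * c := by simp only [mul_assoc]
    _ = -(x * (c * y) * c) := by rw [hx]; simp only [neg_mul, mul_assoc]
    _ = -(x * y * (c * c)) := by rw [hy.eq]; simp only [mul_assoc]
    _ = -(x * y) := by rw [hc, mul_one]
  have h := trace_mul_comm c (x * y * c)
  rw [hconj, trace_neg, mul_assoc, hc, mul_one] at h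
  exact self_eq_neg.mp h.symm

theorem Matrix.posSemidef_of_isSelfAdjoint_of_isIdempotentElem {n 𝕜 : Type*} [Fintype n]
    [RCLike 𝕜] {P : Matrix n n 𝕜} (hs : IsSelfAdjoint P) (hi : IsIdempotentElem P) :
    P.PosSemidef := by
  have h : Pᴴ * P = P := by rw [show Pᴴ = P from hs, hi.eq]
  exact h ▸ posSemidef_conjTranspose_mul_self P

namespace MajoranaFamily

variable {m : ℕ} (F : MajoranaFamily m)

theorem mul_add_mul_swap (j k : Fin (2*m)) :
    F.c j * F.c k + F.c k * F.c j = if j = k then 2 else 0 := by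
  split_ifs with h
  · subst h; rw [F.sq, one_add_one_eq_two]
  · rw [F.anticomm j k h, neg_add_cancel]

theorem star_c (j : Fin (2*m)) : star (F.c j) = F.c j := F.herm j

theorem mul_mul_mul_self {j k : Fin (2*m)} (hjk : j ≠ k) :
    F.c j * F.c k * (F.c j * F.c k) = -1 := by
  rw [mul_assoc, ← mul_assoc (F.c k), F.anticomm k j hjk.symm, neg_mul, mul_neg, mul_assoc,
    F.sq, mul_one, F.sq]

theorem commute_mul {j a b : Fin (2*m)} (ha : j ≠ a) (hb : j ≠ b) :
    Commute (F.c j) (F.c a * F.c b) := by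
  rw [commute_iff_eq, ← mul_assoc, F.anticomm j a ha, neg_mul, mul_assoc, F.anticomm j b hb,
    mul_neg, neg_neg, mul_assoc]

theorem tilde_mul_add_mul_swap (R : Matrix (Fin (2*m)) (Fin (2*m)) ℝ) (j k : Fin (2*m)) :
    tilde F R j * tilde F R k + tilde F R k * tilde F R j = (2 * ((Rᵀ * R) j k : ℂ)) • 1 := by
  have hswap : tilde F R k * tilde F R j =
      ∑ i, ∑ i', ((R i j : ℂ) * R i' k) • (F.c i' * F.c i) := by
    rw [tilde, tilde, Finset.sum_mul_sum, Finset.sum_comm]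
    simp only [smul_mul_smul_comm, mul_comm]
  rw [hswap, tilde, tilde, Finset.sum_mul_sum]
  simp only [smul_mul_smul_comm, ← Finset.sum_add_distrib, ← smul_add, mul_add_mul_swap,
    smul_ite, smul_zero, Finset.sum_ite_eq, Finset.mem_univ, if_true]
  rw [← Finset.sum_smul, mul_apply, mul_comm (2 : ℂ), mul_smul, two_smul, one_add_one_eq_two]
  simp only [transpose_apply, Complex.ofReal_sum, Complex.ofReal_mul]

def rotate (R : Matrix (Fin (2*m)) (Fin (2*m)) ℝ) (hR : Rᵀ * R = 1) : MajoranaFamily m where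
  c := tilde F R
  herm j := isSelfAdjoint_sum _ fun i _ =>
    (show IsSelfAdjoint (R i j : ℂ) from Complex.conj_ofReal _).smul (F.herm i)
  sq j := by
    have h := F.tilde_mul_add_mul_swap R j j
    rw [hR, one_apply_eq, Complex.ofReal_one, mul_one, ← two_smul ℂ] at h
    exact smul_right_injective _ two_ne_zero h
  anticomm j k hjk := by
    have h := F.tilde_mul_add_mul_swap R j k
    rw [hR, one_apply_ne hjk, Complex.ofReal_zero, mul_zero, zero_smul] at h
    exact eq_neg_of_add_eq_zero_left h

theorem lambda_rotate (R : Matrix (Fin (2*m)) (Fin (2*m)) ℝ) (hR : Rᵀ * R = 1) :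
    Lambda (F.rotate R hR) = Lambda F := by
  have horth (i i' : Fin (2*m)) : ∑ j, (R i j : ℂ) * R i' j = if i = i' then 1 else 0 := by
    have h : (R * Rᵀ) i i' = (1 : Matrix (Fin (2*m)) (Fin (2*m)) ℝ) i i' := by
      rw [mul_eq_one_comm.mp hR]
    rw [mul_apply, one_apply] at h
    simp only [transpose_apply] at h
    split_ifs at h ⊢ <;> exact_mod_cast h
  ext ⟨a, b⟩ ⟨a', b'⟩
  simp only [Lambda, rotate, tilde, Matrix.sum_apply, kroneckerMap_apply, Matrix.smul_apply,
    smul_eq_mul, Finset.sum_mul_sum]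
  calc _ = ∑ i, ∑ i', (∑ j, (R i j : ℂ) * R i' j) * (F.c i a a' * F.c i' b b') := by
        rw [Finset.sum_comm]
        refine Finset.sum_congr rfl fun i _ => ?_
        rw [Finset.sum_comm]
        refine Finset.sum_congr rfl fun i' _ => ?_
        rw [Finset.sum_mul]
        exact Finset.sum_congr rfl fun j _ => by ring
    _ = _ := by simp [horth]

end MajoranaFamily

section Pairing

variable {m : ℕ}

def evenIdx (k : Fin m) : Fin (2*m) := ⟨2*k, by omega⟩

def oddIdx (k : Fin m) : Fin (2*m) := ⟨2*k+1, by omega⟩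

theorem evenIdx_ne_oddIdx (k l : Fin m) : evenIdx k ≠ oddIdx l := by
  simp only [evenIdx, oddIdx, ne_eq, Fin.mk.injEq]; omega

theorem evenIdx_injective : Function.Injective (evenIdx (m := m)) := by
  intro k l h; simp only [evenIdx, Fin.mk.injEq] at h; omega

theorem oddIdx_injective : Function.Injective (oddIdx (m := m)) := by
  intro k l h; simp only [oddIdx, Fin.mk.injEq] at h; omega

theorem Fin.sum_univ_two_mul {M : Type*} [AddCommMonoid M] (f : Fin (2*m) → M) :
    ∑ j, f j = ∑ k, (f (evenIdx k) + f (oddIdx k)) := by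
  rw [← (finProdFinEquiv.trans (finCongr (mul_comm m 2))).sum_comp, Fintype.sum_prod_type]
  refine Finset.sum_congr rfl fun k _ => ?_
  rw [Fin.sum_univ_two]
  congr 2 <;> ext <;> simp [evenIdx, oddIdx, add_comm]

end Pairing

theorem Complex.I_mul_ofReal_mul_self {r : ℝ} (hr : r = 1 ∨ r = -1) :
    Complex.I * r * (Complex.I * r) = -1 := by
  rcases hr with rfl | rfl <;> ring_nf <;> simp

namespace MajoranaFamily

variable {m : ℕ} (G : MajoranaFamily m) (lam : Fin m → ℝ)

def pairOp (k : Fin m) : Mat m := (Complex.I * lam k) • (G.c (evenIdx k) * G.c (oddIdx k))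

def pairProj (k : Fin m) : Mat m := (2 : ℂ)⁻¹ • (1 + G.pairOp lam k)

def gaussState : Mat m := ((List.finRange m).map (G.pairProj lam)).prod

theorem commute_pairOp (k l : Fin m) : Commute (G.pairOp lam k) (G.pairOp lam l) := by
  obtain rfl | hkl := eq_or_ne k l
  · exact Commute.refl _
  refine ((Commute.mul_left ?_ ?_).smul_left _).smul_right _
  · exact G.commute_mul (evenIdx_injective.ne hkl) (evenIdx_ne_oddIdx k l)
  · exact G.commute_mul (evenIdx_ne_oddIdx l k).symm (oddIdx_injective.ne hkl)

theorem commute_pairProj (k l : Fin m) : Commute (G.pairProj lam k) (G.pairProj lam l) := by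
  have h : Commute (1 + G.pairOp lam k) (1 + G.pairOp lam l) :=
    (Commute.one_left _).add_left ((Commute.one_right _).add_right (G.commute_pairOp lam k l))
  exact (h.smul_left _).smul_right _

theorem isSelfAdjoint_pairOp (k : Fin m) : IsSelfAdjoint (G.pairOp lam k) := by
  rw [IsSelfAdjoint, pairOp, star_smul, star_mul (G.c _), G.star_c, G.star_c,
    G.anticomm _ _ (evenIdx_ne_oddIdx k k).symm, smul_neg, ← neg_smul]
  congr 1
  simp

theorem isSelfAdjoint_pairProj (k : Fin m) : IsSelfAdjoint (G.pairProj lam k) :=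
  (show IsSelfAdjoint (2⁻¹ : ℂ) by simp [IsSelfAdjoint]).smul
    ((IsSelfAdjoint.one _).add (G.isSelfAdjoint_pairOp lam k))

theorem pairOp_mul_self {k : Fin m} (hk : lam k = 1 ∨ lam k = -1) :
    G.pairOp lam k * G.pairOp lam k = 1 := by
  rw [pairOp, smul_mul_smul_comm, G.mul_mul_mul_self (evenIdx_ne_oddIdx k k),
    Complex.I_mul_ofReal_mul_self hk, smul_neg, neg_one_smul, neg_neg]

theorem isIdempotentElem_pairProj {k : Fin m} (hk : lam k = 1 ∨ lam k = -1) :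
    IsIdempotentElem (G.pairProj lam k) := by
  have h : (1 + G.pairOp lam k) * (1 + G.pairOp lam k) = (2 : ℂ) • (1 + G.pairOp lam k) := by
    rw [mul_add, add_mul, add_mul, G.pairOp_mul_self lam hk, two_smul]
    simp only [one_mul, mul_one]
    abel
  rw [IsIdempotentElem, pairProj, smul_mul_smul_comm, h, smul_smul]
  norm_num

theorem evenIdx_mul_pairProj {k : Fin m} (hk : lam k = 1 ∨ lam k = -1) :
    G.c (evenIdx k) * G.pairProj lam k =
      (Complex.I * lam k) • (G.c (oddIdx k) * G.pairProj lam k) := by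
  have ha : G.c (evenIdx k) * G.pairOp lam k = (Complex.I * lam k) • G.c (oddIdx k) := by
    rw [pairOp, mul_smul_comm, ← mul_assoc, G.sq, one_mul]
  have hb : G.c (oddIdx k) * G.pairOp lam k = -(Complex.I * lam k) • G.c (evenIdx k) := by
    rw [pairOp, mul_smul_comm, ← mul_assoc, G.anticomm _ _ (evenIdx_ne_oddIdx k k).symm,
      neg_mul, mul_assoc, G.sq, mul_one, smul_neg, neg_smul]
  rw [pairProj, mul_smul_comm, mul_smul_comm, mul_add, mul_add, mul_one, mul_one, ha, hb]
  have hz := Complex.I_mul_ofReal_mul_self hk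
  linear_combination (norm := module) ((2:ℂ)⁻¹ • hz) • G.c (evenIdx k)

theorem evenIdx_mul_pairOp (k : Fin m) :
    G.c (evenIdx k) * G.pairOp lam k = -(G.pairOp lam k * G.c (evenIdx k)) := by
  rw [pairOp, mul_smul_comm, smul_mul_assoc, ← smul_neg, ← mul_assoc, G.sq, one_mul, mul_assoc,
    G.anticomm _ _ (evenIdx_ne_oddIdx k k).symm, mul_neg, ← mul_assoc, G.sq, one_mul, neg_neg]

theorem commute_evenIdx_pairProj {k l : Fin m} (hkl : k ≠ l) :
    Commute (G.c (evenIdx k)) (G.pairProj lam l) :=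
  ((Commute.one_right _).add_right ((G.commute_mul (evenIdx_injective.ne hkl)
    (evenIdx_ne_oddIdx k l)).smul_right _)).smul_right _

theorem pairwise_commute_map_pairProj (L : List (Fin m)) :
    (L.map (G.pairProj lam)).Pairwise Commute :=
  List.pairwise_map.mpr (List.pairwise_of_forall (G.commute_pairProj lam))

theorem two_pow_length_mul_trace_prod_pairProj {L : List (Fin m)} (hL : L.Nodup) :
    2 ^ L.length * ((L.map (G.pairProj lam)).prod).trace = 2 ^ m := by
  induction L with
  | nil => simp [trace_one]
  | cons k L ih =>
    rw [List.nodup_cons] at hL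
    have hcomm : Commute (G.c (evenIdx k)) (L.map (G.pairProj lam)).prod := by
      refine Commute.list_prod_right _ _ fun x hx => ?_
      obtain ⟨l, hl, rfl⟩ := List.mem_map.mp hx
      exact G.commute_evenIdx_pairProj lam (ne_of_mem_of_not_mem hl hL.1).symm
    have hzero := trace_mul_eq_zero_of_anticommute (G.sq _) (G.evenIdx_mul_pairOp lam k) hcomm
    rw [List.map_cons, List.prod_cons, pairProj, smul_mul_assoc, add_mul, one_mul, trace_smul,
      trace_add, hzero, add_zero, List.length_cons, pow_succ, smul_eq_mul, ← ih hL.2]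
    field_simp

theorem isSelfAdjoint_gaussState : IsSelfAdjoint (G.gaussState lam) :=
  List.isSelfAdjoint_prod (G.pairwise_commute_map_pairProj lam _) (by
    simpa using G.isSelfAdjoint_pairProj lam)

theorem isIdempotentElem_gaussState (hlam : ∀ k, lam k = 1 ∨ lam k = -1) :
    IsIdempotentElem (G.gaussState lam) :=
  List.isIdempotentElem_prod (G.pairwise_commute_map_pairProj lam _) (by
    simpa using fun k => G.isIdempotentElem_pairProj lam (hlam k))

theorem trace_gaussState : (G.gaussState lam).trace = 1 := by
  have h := G.two_pow_length_mul_trace_prod_pairProj lam (List.nodup_finRange m)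
  rw [List.length_finRange] at h
  exact mul_left_cancel₀ (pow_ne_zero m two_ne_zero) (h.trans (mul_one _).symm)

theorem evenIdx_mul_gaussState (hlam : ∀ k, lam k = 1 ∨ lam k = -1) (k : Fin m) :
    G.c (evenIdx k) * G.gaussState lam =
      (Complex.I * lam k) • (G.c (oddIdx k) * G.gaussState lam) := by
  obtain ⟨Y, hY⟩ := List.exists_prod_eq_mul_of_mem (G.pairwise_commute_map_pairProj lam _)
    (List.mem_map_of_mem (List.mem_finRange k))
  rw [gaussState, hY, ← mul_assoc, ← mul_assoc, G.evenIdx_mul_pairProj lam (hlam k),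
    smul_mul_assoc]

theorem lambda_mul_kronecker_gaussState (hlam : ∀ k, lam k = 1 ∨ lam k = -1) :
    Lambda G * (G.gaussState lam ⊗ₖ G.gaussState lam) = 0 := by
  rw [Lambda, Finset.sum_mul]
  simp only [← mul_kronecker_mul]
  rw [Fin.sum_univ_two_mul]
  refine Finset.sum_eq_zero fun k _ => ?_
  rw [G.evenIdx_mul_gaussState lam hlam k, smul_kronecker, kronecker_smul, smul_smul,
    Complex.I_mul_ofReal_mul_self (hlam k), neg_one_smul, neg_add_cancel]

end MajoranaFamily

namespace IsPureGaussian

variable {m : ℕ} {F : MajoranaFamily m} {ρ : Mat m}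

theorem exists_gaussState (h : IsPureGaussian F ρ) :
    ∃ (G : MajoranaFamily m) (lam : Fin m → ℝ), (∀ k, lam k = 1 ∨ lam k = -1) ∧
      Lambda G = Lambda F ∧ ρ = G.gaussState lam := by
  obtain ⟨R, lam, hR, -, hlam, rfl⟩ := h
  refine ⟨F.rotate R hR, lam, hlam, F.lambda_rotate R hR, ?_⟩
  have h : List.ofFn ((F.rotate R hR).pairProj lam) = (List.ofFn fun k =>
      (1 : Mat m) + (Complex.I * lam k) • (tilde F R (evenIdx k) * tilde F R (oddIdx k))).map
        ((2 : ℂ)⁻¹ • ·) := by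
    rw [List.map_ofFn]; rfl
  rw [MajoranaFamily.gaussState, ← List.ofFn_eq_map, h, ← List.smul_prod, List.length_ofFn,
    inv_pow]
  rfl

theorem isSelfAdjoint (h : IsPureGaussian F ρ) : IsSelfAdjoint ρ := by
  obtain ⟨G, lam, -, -, rfl⟩ := h.exists_gaussState
  exact G.isSelfAdjoint_gaussState lam

theorem isIdempotentElem (h : IsPureGaussian F ρ) : IsIdempotentElem ρ := by
  obtain ⟨G, lam, hlam, -, rfl⟩ := h.exists_gaussState
  exact G.isIdempotentElem_gaussState lam hlam

theorem trace_eq_one (h : IsPureGaussian F ρ) : ρ.trace = 1 := by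
  obtain ⟨G, lam, -, -, rfl⟩ := h.exists_gaussState
  exact G.trace_gaussState lam

theorem lambda_mul_kronecker_self (h : IsPureGaussian F ρ) : Lambda F * (ρ ⊗ₖ ρ) = 0 := by
  obtain ⟨G, lam, hlam, hG, rfl⟩ := h.exists_gaussState
  rw [← hG]
  exact G.lambda_mul_kronecker_gaussState lam hlam

end IsPureGaussian

section KroneckerPi

variable {ι κ R : Type*} [Fintype ι] [CommSemiring R]

def Matrix.kroneckerPi (B : ι → Matrix κ κ R) : Matrix (ι → κ) (ι → κ) R :=
  fun x y => ∏ l, B l (x l) (y l)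

theorem Matrix.kroneckerPi_mul_kroneckerPi [DecidableEq ι] [Fintype κ]
    (B B' : ι → Matrix κ κ R) :
    kroneckerPi B * kroneckerPi B' = kroneckerPi (B * B') := by
  ext x y
  simp only [kroneckerPi, mul_apply, Pi.mul_apply, Finset.prod_univ_sum, Fintype.piFinset_univ,
    Finset.prod_mul_distrib]

theorem Matrix.conjTranspose_kroneckerPi [StarRing R] (B : ι → Matrix κ κ R) :
    (kroneckerPi B)ᴴ = kroneckerPi fun l => (B l)ᴴ := by
  ext x y
  simp [kroneckerPi, star_prod]

theorem Matrix.trace_kroneckerPi [DecidableEq ι] [Fintype κ] (B : ι → Matrix κ κ R) :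
    (kroneckerPi B).trace = ∏ l, (B l).trace := by
  simp only [trace, diag, kroneckerPi, Finset.prod_univ_sum, Fintype.piFinset_univ]

end KroneckerPi

section TensorPower

variable {m n : ℕ}

theorem tpow_eq_kroneckerPi (A : Mat m) : tpow n A = kroneckerPi fun _ => A := rfl

theorem embedAt_eq_kroneckerPi (k : Fin n) (A : Mat m) :
    embedAt n k A = kroneckerPi (Pi.mulSingle k A) := by
  ext x y
  rw [embedAt, kroneckerPi, ← Finset.mul_prod_erase _ _ (Finset.mem_univ k)]
  refine congrArg₂ _ (by simp) (Finset.prod_congr rfl fun l hl => ?_)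
  simp [(Finset.mem_erase.mp hl).1, one_apply]

theorem isSelfAdjoint_tpow {A : Mat m} (hA : IsSelfAdjoint A) : IsSelfAdjoint (tpow n A) := by
  rw [IsSelfAdjoint, tpow_eq_kroneckerPi, star_eq_conjTranspose, conjTranspose_kroneckerPi]
  simp_rw [← star_eq_conjTranspose, hA.star_eq]

theorem isIdempotentElem_tpow {A : Mat m} (hA : IsIdempotentElem A) :
    IsIdempotentElem (tpow n A) := by
  rw [IsIdempotentElem, tpow_eq_kroneckerPi, kroneckerPi_mul_kroneckerPi]
  simp_rw [Pi.mul_def, hA.eq]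

theorem trace_tpow (A : Mat m) : (tpow n A).trace = A.trace ^ n := by
  rw [tpow_eq_kroneckerPi, trace_kroneckerPi, Finset.prod_const, Finset.card_univ,
    Fintype.card_fin]

theorem lambdaKL_mul_tpow_apply (F : MajoranaFamily m) {a b : Fin n} (hab : a ≠ b) (A : Mat m)
    (x y : Fin n → Fin (2^m)) :
    (LambdaKL F n a b * tpow n A) x y =
      (Lambda F * (A ⊗ₖ A)) (x a, x b) (y a, y b) *
        ∏ l ∈ (Finset.univ.erase a).erase b, A (x l) (y l) := by
  have hb : b ∈ Finset.univ.erase a := Finset.mem_erase.mpr ⟨hab.symm, Finset.mem_univ b⟩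
  simp only [LambdaKL, Lambda, Finset.sum_mul, ← mul_kronecker_mul, Matrix.sum_apply,
    kroneckerMap_apply, embedAt_eq_kroneckerPi, tpow_eq_kroneckerPi, kroneckerPi_mul_kroneckerPi]
  refine Finset.sum_congr rfl fun j _ => ?_
  rw [kroneckerPi, ← Finset.mul_prod_erase _ _ (Finset.mem_univ a),
    ← Finset.mul_prod_erase _ _ hb, ← mul_assoc]
  simp only [Pi.mul_apply, Pi.mulSingle_eq_same, Pi.mulSingle_eq_of_ne hab,
    Pi.mulSingle_eq_of_ne hab.symm, mul_one, one_mul]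
  refine congrArg _ (Finset.prod_congr rfl fun l hl => ?_)
  obtain ⟨hlb, hl⟩ := Finset.mem_erase.mp hl
  rw [Pi.mulSingle_eq_of_ne (Finset.ne_of_mem_erase hl), Pi.mulSingle_eq_of_ne hlb, one_mul,
    one_mul]

theorem lambdaKL_mul_tpow_eq_zero (F : MajoranaFamily m) {a b : Fin n} (hab : a ≠ b) {A : Mat m}
    (hA : Lambda F * (A ⊗ₖ A) = 0) : LambdaKL F n a b * tpow n A = 0 := by
  ext x y
  rw [lambdaKL_mul_tpow_apply F hab, hA, Matrix.zero_apply, zero_mul, Matrix.zero_apply]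

theorem ptrRest_tpow (hn : 1 ≤ n) (A : Mat m) :
    ptrRest n hn (tpow n A) = A.trace ^ (n - 1) • A := by
  obtain ⟨n, rfl⟩ : ∃ n', n = n' + 1 := ⟨n - 1, by omega⟩
  ext a b
  have hsplit (g : Fin (n + 1 - 1) → Fin (2^m)) :
      ∏ i : Fin (n + 1), A (if h : i.val = 0 then a else g ⟨i.val - 1, by omega⟩)
        (if h : i.val = 0 then b else g ⟨i.val - 1, by omega⟩) =
      A a b * ∏ i : Fin n, A (g i) (g i) :=
    Fin.prod_univ_succ _
  simp only [ptrRest, tpow, hsplit]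
  rw [← Finset.mul_sum, Matrix.smul_apply, smul_eq_mul, mul_comm]
  exact congrArg (· * A a b) (trace_tpow A)

theorem ptrRest_sum_smul (hn : 1 ≤ n) {ι : Type*} (s : Finset ι) (c : ι → ℝ)
    (X : ι → MatN m n) :
    ptrRest n hn (∑ i ∈ s, c i • X i) = ∑ i ∈ s, c i • ptrRest n hn (X i) := by
  ext a b
  simp only [ptrRest, Matrix.sum_apply, Matrix.smul_apply, Finset.smul_sum]
  exact Finset.sum_comm

end TensorPower

theorem stmt_19_general (m : ℕ) (F : MajoranaFamily m) (ρ : Mat m)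
    (k : ℕ) (p : Fin k → ℝ) (g : Fin k → Mat m)
    (hp : ∀ i, 0 ≤ p i) (hsum : (∑ i, p i) = 1)
    (hg : ∀ i, IsPureGaussian F (g i)) (hρ : ρ = ∑ i, p i • g i)
    (n : ℕ) (hn : 1 ≤ n) :
    IsState (∑ i, p i • tpow n (g i)) ∧
    ptrRest n hn (∑ i, p i • tpow n (g i)) = ρ ∧
    (∀ a b : Fin n, a ≠ b → LambdaKL F n a b * (∑ i, p i • tpow n (g i)) = 0) := by
  refine ⟨⟨?_, ?_⟩, ?_, fun a b hab => ?_⟩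
  · refine posSemidef_sum _ fun i _ => PosSemidef.smul ?_ (hp i)
    exact posSemidef_of_isSelfAdjoint_of_isIdempotentElem
      (isSelfAdjoint_tpow (hg i).isSelfAdjoint) (isIdempotentElem_tpow (hg i).isIdempotentElem)
  · simp only [trace_sum, trace_smul, trace_tpow, (hg _).trace_eq_one, one_pow,
      Complex.real_smul, mul_one]
    exact_mod_cast hsum
  · simp only [ptrRest_sum_smul, ptrRest_tpow, (hg _).trace_eq_one, one_pow, one_smul, hρ]
  · rw [Finset.mul_sum]
    refine Finset.sum_eq_zero fun i _ => ?_
    rw [mul_smul_comm, lambdaKL_mul_tpow_eq_zero F hab (hg i).lambda_mul_kronecker_self, smul_zero]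

/-- Every convex-Gaussian state `ρ = Σ_i p_i |ψ_i⟩⟨ψ_i|` has, for every `n ≥ 1`, the
`n`-Gaussian-symmetric extension `ρ^{(n)} = Σ_i p_i (|ψ_i⟩⟨ψ_i|)^{⊗n}`. -/
theorem stmt_19 (m : ℕ) (hm : 1 ≤ m) (F : MajoranaFamily m) (ρ : Mat m)
    (k : ℕ) (p : Fin k → ℝ) (g : Fin k → Mat m)
    (hp : ∀ i, 0 ≤ p i) (hsum : (∑ i, p i) = 1)
    (hg : ∀ i, IsPureGaussian F (g i)) (hρ : ρ = ∑ i, p i • g i)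
    (n : ℕ) (hn : 1 ≤ n) :
    IsState (∑ i, p i • tpow n (g i)) ∧
    ptrRest n hn (∑ i, p i • tpow n (g i)) = ρ ∧
    (∀ a b : Fin n, a ≠ b → LambdaKL F n a b * (∑ i, p i • tpow n (g i)) = 0) :=
  stmt_19_general m F ρ k p g hp hsum hg hρ n hn

end
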